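/- Let q be a prime power with char(F_q) > 3 and let r > 2 be a natural number with gcd(r, q − 1) = 1. Then the monomial P(x) = xʳ ∈ F_q[x] is a Sidon polynomial over F_q × F_q. -/

import Mathlib

open Polynomial

/-- A subset `A` of an abelian group is a Sidon set if whenever
`a₁ - a₂ = a₃ - a₄` with all four elements in `A`, then `{a₁, a₄} = {a₂, a₃}`. -/
def IsSidon {G : Type*} [AddCommGroup G] (A : Set G) : Prop :=
  ∀ a₁ ∈ A, ∀ a₂ ∈ A, ∀ a₃ ∈ A, ∀ a₄ ∈ A,
    a₁ - a₂ = a₃ - a₄ → ({a₁, a₄} : Set G) = {a₂, a₃}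

/-- The set `(P,Q) = {(P(x), Q(x)) : x ∈ F}`. -/
def polyGraph {F : Type*} [Field F] (P Q : F[X]) : Set (F × F) :=
  Set.range fun x : F => (P.eval x, Q.eval x)

/-- A maximum Sidon set over `F × F`: a Sidon set with exactly `|F|` elements. -/
def IsMaxSidon {F : Type*} [Field F] [Fintype F] (A : Set (F × F)) : Prop :=
  IsSidon A ∧ A.ncard = Fintype.card F

/-- A polynomial `P` is Sidon if there is `Q` with `(P,Q)` a maximum Sidon set. -/
def IsSidonPoly {F : Type*} [Field F] [Fintype F] (P : F[X]) : Prop :=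
  ∃ Q : F[X], IsMaxSidon (polyGraph P Q)

/-- A permutation polynomial: its evaluation map is a bijection of `F`. -/
def IsPermPoly {F : Type*} [Field F] (R : F[X]) : Prop :=
  Function.Bijective fun x : F => R.eval x

/-- Sidon equivalence: `P' = R ∘ P ∘ T` (as functions on `F`)
for permutation polynomials `R`, `T`. -/
def SidonEquiv {F : Type*} [Field F] (P P' : F[X]) : Prop :=
  ∃ R T : F[X], IsPermPoly R ∧ IsPermPoly T ∧
    ∀ x : F, P'.eval x = R.eval (P.eval (T.eval x))

/-
Since `r` is coprime to `q - 1`, the map `x ↦ xʳ` permutes `F`, so with `Q = (xʳ)²` the set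
`(xʳ, Q)` is the parabola `{(y, y²) : y ∈ F}`. The parabola is a Sidon set of size `q` in odd
characteristic: `a - b = c - d` and `a² - b² = c² - d²` with `a ≠ b` force `a + b = c + d`,
hence `a = c` and `b = d`.
-/

lemma pow_surjective_of_coprime_card_sub_one {F : Type*} [Field F] [Fintype F] {r : ℕ}
    (hr : r ≠ 0) (hcop : r.Coprime (Fintype.card F - 1)) :
    Function.Surjective fun x : F => x ^ r := by
  intro y
  rcases eq_or_ne y 0 with rfl | hy
  · exact ⟨0, zero_pow hr⟩
  · have hc : (Nat.card Fˣ).Coprime r := by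
      rwa [Nat.card_units, Nat.card_eq_fintype_card, Nat.coprime_comm]
    obtain ⟨u, hu⟩ := (powCoprime hc).surjective (Units.mk0 y hy)
    exact ⟨u, congrArg Units.val hu⟩

lemma isSidon_range_sq {R : Type*} [CommRing R] [IsDomain R] (h2 : (2 : R) ≠ 0) :
    IsSidon (Set.range fun y : R => (y, y ^ 2)) := by
  rintro _ ⟨a, rfl⟩ _ ⟨b, rfl⟩ _ ⟨c, rfl⟩ _ ⟨d, rfl⟩ h
  obtain ⟨hdiff, hsq⟩ := Prod.ext_iff.mp h
  simp only [Prod.fst_sub, Prod.snd_sub] at hdiff hsq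
  rcases eq_or_ne a b with rfl | hab
  · obtain rfl : c = d := by linear_combination -hdiff
    rfl
  · have hsum : a + b = c + d := by
      refine mul_left_cancel₀ (sub_ne_zero.mpr hab) ?_
      linear_combination hsq - (c + d) * hdiff
    obtain rfl : a = c := mul_left_cancel₀ h2 (by linear_combination hdiff + hsum)
    obtain rfl : b = d := by linear_combination -hdiff
    exact Set.pair_comm _ _

lemma isMaxSidon_range_sq {F : Type*} [Field F] [Fintype F] (h2 : (2 : F) ≠ 0) :
    IsMaxSidon (Set.range fun y : F => (y, y ^ 2)) := by
  refine ⟨isSidon_range_sq h2, ?_⟩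
  rw [← Set.image_univ, Set.ncard_image_of_injective _ fun a b hab => (Prod.ext_iff.mp hab).1,
    Set.ncard_univ, Nat.card_eq_fintype_card]

lemma polyGraph_sq_eq_range_of_surjective {F : Type*} [Field F] {P : F[X]}
    (hP : Function.Surjective fun x : F => P.eval x) :
    polyGraph P (P ^ 2) = Set.range fun y : F => (y, y ^ 2) := by
  simp only [polyGraph, eval_pow]
  exact hP.range_comp fun y : F => (y, y ^ 2)

lemma isSidonPoly_of_surjective {F : Type*} [Field F] [Fintype F] (h2 : (2 : F) ≠ 0)
    {P : F[X]} (hP : Function.Surjective fun x : F => P.eval x) : IsSidonPoly P :=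
  ⟨P ^ 2, by rw [polyGraph_sq_eq_range_of_surjective hP]; exact isMaxSidon_range_sq h2⟩

/-- over a field of characteristic `> 3`, if `r > 2` is coprime to
`q - 1`, then `xʳ` is a Sidon polynomial. -/
theorem stmt_12 {F : Type*} [Field F] [Fintype F] (hchar : 3 < ringChar F)
    (r : ℕ) (hr : 2 < r) (hcop : Nat.Coprime r (Fintype.card F - 1)) :
    IsSidonPoly ((X : F[X]) ^ r) := by
  have h2 : (2 : F) ≠ 0 := Ring.two_ne_zero (by omega)
  refine isSidonPoly_of_surjective h2 ?_
  simpa only [eval_pow, eval_X] using pow_surjective_of_coprime_card_sub_one (by omega) hcop
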